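/- arXiv:2011.11739 — 8 statements merged into one kernel-verified Lean document; each statement's English description precedes it below -/
import Mathlib

section
/- For the discrete-time networked SIR model, if the initial states satisfy s_i^0, p_i^0, r_i^0 ∈ [0,1] and s_i^0 + p_i^0 + r_i^0 = 1 for all nodes i, and the step size conditions 0 < h·γ_i < 1 and h·β_i·∑_{j∈N_i} a_{ij} < 1 hold for all i, then for all time steps k ≥ 0 and all nodes i, s_i^k, p_i^k, r_i^k ∈ [0,1] and s_i^k + p_i^k + r_i^k = 1. -/
/-- Well-posedness of the discrete-time networked SIR model:
states remain in [0,1] and sum to 1 for all time. -/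
theorem sir_well_posed
    (n : ℕ) (h : ℝ) (a : Fin n → Fin n → ℝ) (β γ : Fin n → ℝ)
    (s p r : ℕ → Fin n → ℝ)
    (hh : 0 < h)
    (ha : ∀ i j, 0 ≤ a i j) (hβ : ∀ i, 0 ≤ β i)
    (hγ : ∀ i, 0 < h * γ i ∧ h * γ i < 1)
    (hba : ∀ i, h * β i * ∑ j, a i j < 1)
    (hs : ∀ k i, s (k+1) i = s k i - h * s k i * (β i * ∑ j, a i j * p k j))
    (hp : ∀ k i, p (k+1) i = p k i + h * (s k i * (β i * ∑ j, a i j * p k j) - γ i * p k i))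
    (hr : ∀ k i, r (k+1) i = r k i + h * γ i * p k i)
    (hinit : ∀ i, s 0 i ∈ Set.Icc (0:ℝ) 1 ∧ p 0 i ∈ Set.Icc (0:ℝ) 1 ∧
      r 0 i ∈ Set.Icc (0:ℝ) 1 ∧ s 0 i + p 0 i + r 0 i = 1) :
    ∀ k i, s k i ∈ Set.Icc (0:ℝ) 1 ∧ p k i ∈ Set.Icc (0:ℝ) 1 ∧
      r k i ∈ Set.Icc (0:ℝ) 1 ∧ s k i + p k i + r k i = 1 := by
  intro k
  induction k with
  | zero => exact hinit
  | succ k ih =>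
    intro i
    obtain ⟨⟨hs0, hs1⟩, ⟨hp0, hp1⟩, ⟨hr0, hr1⟩, hsum⟩ := ih i
    -- F = β i * ∑ j, a i j * p k j
    have hF0 : 0 ≤ β i * ∑ j, a i j * p k j := by
      apply mul_nonneg (hβ i)
      apply Finset.sum_nonneg
      intro j _
      exact mul_nonneg (ha i j) ((ih j).2.1.1
      )
    have hsumle : (∑ j, a i j * p k j) ≤ ∑ j, a i j := by
      apply Finset.sum_le_sum
      intro j _
      nth_rewrite 2 [← mul_one (a i j)]
      exact mul_le_mul_of_nonneg_left (ih j).2.1.2 (ha i j)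
    have hF1 : h * (β i * ∑ j, a i j * p k j) < 1 := by
      calc h * (β i * ∑ j, a i j * p k j)
          ≤ h * β i * ∑ j, a i j := by
            rw [mul_assoc]
            apply mul_le_mul_of_nonneg_left _ hh.le
            exact mul_le_mul_of_nonneg_left hsumle (hβ i)
        _ < 1 := hba i
    have hγ0 := (hγ i).1
    have hγ1 := (hγ i).2
    have hFnn : 0 ≤ h * (β i * ∑ j, a i j * p k j) := mul_nonneg hh.le hF0
    -- s nonneg
    have hs' : s (k+1) i = s k i * (1 - h * (β i * ∑ j, a i j * p k j)) := by
      rw [hs k i]; ring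
    have hsnn : 0 ≤ s (k+1) i := by
      rw [hs']
      exact mul_nonneg hs0 (by linarith)
    -- p nonneg
    have hp' : p (k+1) i = p k i * (1 - h * γ i)
        + h * (s k i * (β i * ∑ j, a i j * p k j)) := by
      rw [hp k i]; ring
    have hpnn : 0 ≤ p (k+1) i := by
      rw [hp']
      have : 0 ≤ p k i * (1 - h * γ i) := mul_nonneg hp0 (by linarith)
      have : 0 ≤ h * (s k i * (β i * ∑ j, a i j * p k j)) :=
        mul_nonneg hh.le (mul_nonneg hs0 hF0)
      linarith
    -- r nonneg
    have hrnn : 0 ≤ r (k+1) i := by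
      rw [hr k i]
      have : 0 ≤ h * γ i * p k i := mul_nonneg hγ0.le hp0
      linarith
    -- sum preserved
    have hsum' : s (k+1) i + p (k+1) i + r (k+1) i = 1 := by
      rw [hs k i, hp k i, hr k i]
      linarith [hsum]
    refine ⟨⟨hsnn, by linarith⟩, ⟨hpnn, by linarith⟩, ⟨hrnn, by linarith⟩, hsum'⟩
end

section
/- For the discrete-time networked SEIR model, if the initial states satisfy s_i^0, e_i^0, p_i^0, r_i^0 ∈ [0,1] and s_i^0 + e_i^0 + p_i^0 + r_i^0 = 1 for all nodes i, and the parameter conditions 0 < h·γ_i < 1, 0 < h·σ_i ≤ 1, 0 ≤ h·(β_i^E + β_i)·∑_{j∈N_i} a_{ij} < 1, with β_i^E, β_i, a_{ij} ≥ 0 all hold, then for all k ≥ 0 and all nodes i, s_i^k, e_i^k, p_i^k, r_i^k ∈ [0,1] and s_i^k + e_i^k + p_i^k + r_i^k = 1. -/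
/-- Well-posedness of the discrete-time networked SEIR model:
states remain in [0,1] and sum to 1 for all time. -/
theorem seir_well_posed
    (n : ℕ) (h : ℝ) (a : Fin n → Fin n → ℝ) (βE β σ γ : Fin n → ℝ)
    (s e p r : ℕ → Fin n → ℝ)
    (hh : 0 < h)
    (ha : ∀ i j, 0 ≤ a i j) (hβE : ∀ i, 0 ≤ βE i) (hβ : ∀ i, 0 ≤ β i)
    (hγ : ∀ i, 0 < h * γ i ∧ h * γ i < 1)
    (hσ : ∀ i, 0 < h * σ i ∧ h * σ i ≤ 1)
    (hba : ∀ i, 0 ≤ h * (βE i + β i) * ∑ j, a i j ∧ h * (βE i + β i) * ∑ j, a i j < 1)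
    (hs : ∀ k i, s (k+1) i = s k i -
      h * s k i * (βE i * ∑ j, a i j * e k j + β i * ∑ j, a i j * p k j))
    (he : ∀ k i, e (k+1) i = e k i +
      h * s k i * (βE i * ∑ j, a i j * e k j + β i * ∑ j, a i j * p k j) - h * σ i * e k i)
    (hp : ∀ k i, p (k+1) i = p k i + h * (σ i * e k i - γ i * p k i))
    (hr : ∀ k i, r (k+1) i = r k i + h * γ i * p k i)
    (hinit : ∀ i, s 0 i ∈ Set.Icc (0:ℝ) 1 ∧ e 0 i ∈ Set.Icc (0:ℝ) 1 ∧
      p 0 i ∈ Set.Icc (0:ℝ) 1 ∧ r 0 i ∈ Set.Icc (0:ℝ) 1 ∧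
      s 0 i + e 0 i + p 0 i + r 0 i = 1) :
    ∀ k i, s k i ∈ Set.Icc (0:ℝ) 1 ∧ e k i ∈ Set.Icc (0:ℝ) 1 ∧
      p k i ∈ Set.Icc (0:ℝ) 1 ∧ r k i ∈ Set.Icc (0:ℝ) 1 ∧
      s k i + e k i + p k i + r k i = 1 := by
  have key : ∀ k, ∀ i, (0 ≤ s k i ∧ 0 ≤ e k i ∧ 0 ≤ p k i ∧ 0 ≤ r k i) ∧
      s k i + e k i + p k i + r k i = 1 := by
    intro k
    induction k with
    | zero =>
      intro i
      obtain ⟨h1, h2, h3, h4, h5⟩ := hinit i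
      exact ⟨⟨h1.1, h2.1, h3.1, h4.1⟩, h5⟩
    | succ k ih =>
      intro i
      obtain ⟨⟨hs0, he0, hp0, hr0⟩, hsum⟩ := ih i
      have hub : ∀ j, e k j ≤ 1 ∧ p k j ≤ 1 := by
        intro j
        obtain ⟨⟨hs0', he0', hp0', hr0'⟩, hsum'⟩ := ih j
        constructor <;> linarith
      set ι : ℝ := βE i * ∑ j, a i j * e k j + β i * ∑ j, a i j * p k j with hιdef
      have hι0 : 0 ≤ ι := by
        apply add_nonneg
        · exact mul_nonneg (hβE i)
            (Finset.sum_nonneg fun j _ => mul_nonneg (ha i j) ((ih j).1.2.1))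
        · exact mul_nonneg (hβ i)
            (Finset.sum_nonneg fun j _ => mul_nonneg (ha i j) ((ih j).1.2.2.1))
      have hι1 : h * ι < 1 := by
        have h1 : ∑ j, a i j * e k j ≤ ∑ j, a i j :=
          Finset.sum_le_sum fun j _ => by nlinarith [(hub j).1, ha i j, (ih j).1.2.1]
        have h2 : ∑ j, a i j * p k j ≤ ∑ j, a i j :=
          Finset.sum_le_sum fun j _ => by nlinarith [(hub j).2, ha i j, (ih j).1.2.2.1]
        have hle : ι ≤ (βE i + β i) * ∑ j, a i j := by
          have := mul_le_mul_of_nonneg_left h1 (hβE i)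
          have := mul_le_mul_of_nonneg_left h2 (hβ i)
          nlinarith
        have := mul_le_mul_of_nonneg_left hle hh.le
        nlinarith [(hba i).2]
      have hs' : 0 ≤ s (k+1) i := by
        rw [hs k i, ← hιdef]
        nlinarith [mul_nonneg hs0 (sub_nonneg.mpr hι1.le)]
      have he' : 0 ≤ e (k+1) i := by
        rw [he k i, ← hιdef]
        nlinarith [mul_nonneg he0 (sub_nonneg.mpr (hσ i).2),
          mul_nonneg (mul_nonneg hh.le hs0) hι0]
      have hp' : 0 ≤ p (k+1) i := by
        rw [hp k i]
        nlinarith [mul_nonneg hp0 (sub_nonneg.mpr (hγ i).2.le),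
          mul_nonneg (hσ i).1.le he0]
      have hr' : 0 ≤ r (k+1) i := by
        rw [hr k i]
        nlinarith [mul_nonneg (hγ i).1.le hp0]
      have hsum' : s (k+1) i + e (k+1) i + p (k+1) i + r (k+1) i = 1 := by
        rw [hs k i, he k i, hp k i, hr k i]
        ring_nf
        linarith [hsum]
      exact ⟨⟨hs', he', hp', hr'⟩, hsum'⟩
  intro k i
  obtain ⟨⟨h1, h2, h3, h4⟩, h5⟩ := key k i
  refine ⟨⟨h1, by linarith⟩, ⟨h2, by linarith⟩, ⟨h3, by linarith⟩, ⟨h4, by linarith⟩, h5⟩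
end

section
/- In the discrete-time networked SEIR model under the well-posedness assumptions, the exposed and infected levels of every node converge to zero: lim_{k→∞} e_i^k = 0 and lim_{k→∞} p_i^k = 0 for all nodes i. -/
/-!
Every node keeps `s, e, p, r ≥ 0` with `s + e + p + r = 1`: the step conditions make each update
a nonnegative combination, and the four increments cancel. The recovered level `r` then increases
by `h γ p` per step while staying below `1`, so `∑ₖ p_k` converges and `p → 0`. Solving the
`p`-update for `e` writes `e_k` as a combination of `p_k` and `p_{k+1}`, hence `e → 0`.
-/

open Filter Topology Finset

theorem tendsto_zero_of_succ_eq_add_mul_of_le {u x : ℕ → ℝ} {c B : ℝ} (hc : 0 < c)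
    (hx : ∀ k, 0 ≤ x k) (hu : ∀ k, u (k + 1) = u k + c * x k) (hB : ∀ k, u k ≤ B) :
    Tendsto x atTop (𝓝 0) := by
  refine (summable_of_sum_range_le hx (c := (B - u 0) / c) fun m => ?_).tendsto_atTop_zero
  have htelescope : c * ∑ k ∈ range m, x k = u m - u 0 := by
    rw [mul_sum, ← sum_range_sub u]
    exact sum_congr rfl fun k _ => by rw [hu k]; ring
  rw [le_div_iff₀ hc, mul_comm, htelescope]
  linarith [hB m]

theorem tendsto_zero_of_tendsto_zero_of_succ_eq {x y : ℕ → ℝ} {h σ γ : ℝ} (hhσ : h * σ ≠ 0)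
    (hxy : ∀ k, x (k + 1) = x k + h * (σ * y k - γ * x k)) (hx : Tendsto x atTop (𝓝 0)) :
    Tendsto y atTop (𝓝 0) := by
  have hy : y = fun k => (h * σ)⁻¹ * (x (k + 1) - x k + h * γ * x k) := by
    funext k
    rw [hxy k, show x k + h * (σ * y k - γ * x k) - x k + h * γ * x k = h * σ * y k by ring,
      inv_mul_cancel_left₀ hhσ]
  have hlim := ((hx.comp (tendsto_add_atTop_nat 1)).sub hx).add (hx.const_mul (h * γ))
  rw [hy]
  simpa using hlim.const_mul (h * σ)⁻¹

section SEIR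

variable {n : ℕ} (a : Fin n → Fin n → ℝ) (βE β : Fin n → ℝ)

/-- The infection pressure `ι_i` of the model. -/
def infectionPressure (e p : Fin n → ℝ) (i : Fin n) : ℝ :=
  βE i * ∑ j, a i j * e j + β i * ∑ j, a i j * p j

variable {a βE β}

theorem infectionPressure_nonneg (ha : ∀ i j, 0 ≤ a i j) (hβE : ∀ i, 0 ≤ βE i)
    (hβ : ∀ i, 0 ≤ β i) {e p : Fin n → ℝ} (he : ∀ j, 0 ≤ e j) (hp : ∀ j, 0 ≤ p j) (i : Fin n) :
    0 ≤ infectionPressure a βE β e p i :=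
  add_nonneg (mul_nonneg (hβE i) (sum_nonneg fun j _ => mul_nonneg (ha i j) (he j)))
    (mul_nonneg (hβ i) (sum_nonneg fun j _ => mul_nonneg (ha i j) (hp j)))

theorem infectionPressure_le (ha : ∀ i j, 0 ≤ a i j) (hβE : ∀ i, 0 ≤ βE i)
    (hβ : ∀ i, 0 ≤ β i) {e p : Fin n → ℝ} (he : ∀ j, e j ≤ 1) (hp : ∀ j, p j ≤ 1) (i : Fin n) :
    infectionPressure a βE β e p i ≤ (βE i + β i) * ∑ j, a i j := by
  have hae : ∑ j, a i j * e j ≤ ∑ j, a i j :=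
    sum_le_sum fun j _ => mul_le_of_le_one_right (ha i j) (he j)
  have hap : ∑ j, a i j * p j ≤ ∑ j, a i j :=
    sum_le_sum fun j _ => mul_le_of_le_one_right (ha i j) (hp j)
  rw [infectionPressure, add_mul]
  exact add_le_add (mul_le_mul_of_nonneg_left hae (hβE i)) (mul_le_mul_of_nonneg_left hap (hβ i))

theorem seir_nonneg_and_sum_eq_one {h : ℝ} {σ γ : Fin n → ℝ} {s e p r : ℕ → Fin n → ℝ}
    (hh : 0 < h) (ha : ∀ i j, 0 ≤ a i j) (hβE : ∀ i, 0 ≤ βE i) (hβ : ∀ i, 0 ≤ β i)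
    (hγ : ∀ i, 0 < h * γ i ∧ h * γ i < 1) (hσ : ∀ i, 0 < h * σ i ∧ h * σ i ≤ 1)
    (hba : ∀ i, h * (βE i + β i) * ∑ j, a i j < 1)
    (hs : ∀ k i, s (k + 1) i = s k i - h * s k i * infectionPressure a βE β (e k) (p k) i)
    (he : ∀ k i, e (k + 1) i =
      e k i + h * s k i * infectionPressure a βE β (e k) (p k) i - h * σ i * e k i)
    (hp : ∀ k i, p (k + 1) i = p k i + h * (σ i * e k i - γ i * p k i))
    (hr : ∀ k i, r (k + 1) i = r k i + h * γ i * p k i)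
    (hinit : ∀ i, 0 ≤ s 0 i ∧ 0 ≤ e 0 i ∧ 0 ≤ p 0 i ∧ 0 ≤ r 0 i ∧
      s 0 i + e 0 i + p 0 i + r 0 i = 1) (k : ℕ) (i : Fin n) :
    0 ≤ s k i ∧ 0 ≤ e k i ∧ 0 ≤ p k i ∧ 0 ≤ r k i ∧ s k i + e k i + p k i + r k i = 1 := by
  induction k generalizing i with
  | zero => exact hinit i
  | succ k ih =>
    obtain ⟨hsk, hek, hpk, hrk, hsum⟩ := ih i
    have hι₀ := infectionPressure_nonneg ha hβE hβ (fun j => (ih j).2.1) (fun j => (ih j).2.2.1) i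
    have hι₁ : h * infectionPressure a βE β (e k) (p k) i < 1 := by
      have hle := infectionPressure_le ha hβE hβ (e := e k) (p := p k)
        (fun j => by linarith [ih j]) (fun j => by linarith [ih j]) i
      nlinarith [hba i]
    refine ⟨?_, ?_, ?_, ?_, ?_⟩
    · rw [hs k i]; nlinarith
    · rw [he k i]; nlinarith [(hσ i).2, mul_nonneg (mul_nonneg hh.le hsk) hι₀]
    · rw [hp k i]; nlinarith [(hγ i).2, (hσ i).1]
    · rw [hr k i]; nlinarith [(hγ i).1]
    · rw [hs k i, he k i, hp k i, hr k i]; linarith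

end SEIR

/-- In the networked SEIR model the exposed and infected levels
of every node converge to zero. -/
theorem seir_e_p_to_zero
    (n : ℕ) (h : ℝ) (a : Fin n → Fin n → ℝ) (βE β σ γ : Fin n → ℝ)
    (s e p r : ℕ → Fin n → ℝ)
    (hh : 0 < h)
    (ha : ∀ i j, 0 ≤ a i j) (hβE : ∀ i, 0 ≤ βE i) (hβ : ∀ i, 0 ≤ β i)
    (hγ : ∀ i, 0 < h * γ i ∧ h * γ i < 1)
    (hσ : ∀ i, 0 < h * σ i ∧ h * σ i ≤ 1)
    (hba : ∀ i, 0 ≤ h * (βE i + β i) * ∑ j, a i j ∧ h * (βE i + β i) * ∑ j, a i j < 1)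
    (hs : ∀ k i, s (k+1) i = s k i -
      h * s k i * (βE i * ∑ j, a i j * e k j + β i * ∑ j, a i j * p k j))
    (he : ∀ k i, e (k+1) i = e k i +
      h * s k i * (βE i * ∑ j, a i j * e k j + β i * ∑ j, a i j * p k j) - h * σ i * e k i)
    (hp : ∀ k i, p (k+1) i = p k i + h * (σ i * e k i - γ i * p k i))
    (hr : ∀ k i, r (k+1) i = r k i + h * γ i * p k i)
    (hinit : ∀ i, s 0 i ∈ Set.Icc (0:ℝ) 1 ∧ e 0 i ∈ Set.Icc (0:ℝ) 1 ∧
      p 0 i ∈ Set.Icc (0:ℝ) 1 ∧ r 0 i ∈ Set.Icc (0:ℝ) 1 ∧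
      s 0 i + e 0 i + p 0 i + r 0 i = 1) :
    ∀ i, Filter.Tendsto (fun k => e k i) Filter.atTop (nhds 0) ∧
      Filter.Tendsto (fun k => p k i) Filter.atTop (nhds 0) := by
  have hinv := seir_nonneg_and_sum_eq_one hh ha hβE hβ hγ hσ (fun i => (hba i).2) hs he hp hr
    fun i => ⟨(hinit i).1.1, (hinit i).2.1.1, (hinit i).2.2.1.1, (hinit i).2.2.2.1.1,
      (hinit i).2.2.2.2⟩
  intro i
  have hp_lim : Tendsto (fun k => p k i) atTop (𝓝 0) :=
    tendsto_zero_of_succ_eq_add_mul_of_le (u := fun k => r k i) (hγ i).1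
      (fun k => (hinv k i).2.2.1) (fun k => by rw [hr k i, mul_assoc]) (B := 1)
      fun k => by linarith [hinv k i]
  exact ⟨tendsto_zero_of_tendsto_zero_of_succ_eq (hσ i).1.ne' (fun k => hp k i) hp_lim, hp_lim⟩
end

section
/- In the discrete-time networked SEIR model under the well-posedness assumptions, the recovered level r_i^k is non-decreasing in k for each node i, and converges to a limit r_i^* = 1 − s_i^* where s_i^* = lim_{k→∞} s_i^k (i.e., the system converges to an equilibrium of the form (s^*, 0, 0, 1 − s^*)). -/
/-!
Every compartment stays nonnegative and the four compartments of a node sum to `1`, because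
each update moves mass between compartments by nonnegative amounts (this is where the step-size
conditions enter). Hence `r` is nondecreasing and `s` nonincreasing, both bounded, so both converge.
Since `h γᵢ pᵢᵏ = rᵢᵏ⁺¹ - rᵢᵏ`, the convergence of `r` forces `p → 0`; likewise
`h σᵢ eᵢᵏ = pᵢᵏ⁺¹ - pᵢᵏ + h γᵢ pᵢᵏ` forces `e → 0`, and then `r = 1 - s - e - p → 1 - s*`.
-/

open Filter Topology

lemma Filter.Tendsto.succ_sub_nhds_zero {u : ℕ → ℝ} {L : ℝ} (hu : Tendsto u atTop (𝓝 L)) :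
    Tendsto (fun k => u (k + 1) - u k) atTop (𝓝 0) := by
  simpa using (hu.comp (tendsto_add_atTop_nat 1)).sub hu

structure IsSEIRDistribution (s e p r : ℝ) : Prop where
  s_nonneg : 0 ≤ s
  e_nonneg : 0 ≤ e
  p_nonneg : 0 ≤ p
  r_nonneg : 0 ≤ r
  sum_eq_one : s + e + p + r = 1

namespace IsSEIRDistribution

variable {s e p r : ℝ}

lemma e_le_one (hd : IsSEIRDistribution s e p r) : e ≤ 1 := by
  linarith [hd.s_nonneg, hd.p_nonneg, hd.r_nonneg, hd.sum_eq_one]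

lemma p_le_one (hd : IsSEIRDistribution s e p r) : p ≤ 1 := by
  linarith [hd.s_nonneg, hd.e_nonneg, hd.r_nonneg, hd.sum_eq_one]

lemma r_le_one (hd : IsSEIRDistribution s e p r) : r ≤ 1 := by
  linarith [hd.s_nonneg, hd.e_nonneg, hd.p_nonneg, hd.sum_eq_one]

lemma step (hd : IsSEIRDistribution s e p r) {h ι σ γ : ℝ} (hh : 0 ≤ h) (hι : 0 ≤ ι)
    (hhι : h * ι ≤ 1) (hσ : 0 ≤ h * σ) (hσ_le : h * σ ≤ 1) (hγ : 0 ≤ h * γ) (hγ_le : h * γ ≤ 1) :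
    IsSEIRDistribution (s - h * s * ι) (e + h * s * ι - h * σ * e) (p + h * (σ * e - γ * p))
      (r + h * γ * p) := by
  have infections_nonneg : 0 ≤ h * s * ι := mul_nonneg (mul_nonneg hh hd.s_nonneg) hι
  refine ⟨?_, ?_, ?_, ?_, by linear_combination hd.sum_eq_one⟩
  · linarith [mul_nonneg hd.s_nonneg (sub_nonneg.2 hhι)]
  · linarith [mul_nonneg hd.e_nonneg (sub_nonneg.2 hσ_le)]
  · linarith [mul_nonneg hd.p_nonneg (sub_nonneg.2 hγ_le), mul_nonneg hσ hd.e_nonneg]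
  · linarith [mul_nonneg hγ hd.p_nonneg, hd.r_nonneg]

end IsSEIRDistribution

section SEIR

variable {V : Type*} [Fintype V]

/-- The force of infection `ιᵢ` of the model, at one time step. -/
def forceOfInfection (a : V → V → ℝ) (βE β e p : V → ℝ) (i : V) : ℝ :=
  βE i * ∑ j, a i j * e j + β i * ∑ j, a i j * p j

lemma forceOfInfection_nonneg {a : V → V → ℝ} {βE β e p : V → ℝ} (ha : ∀ i j, 0 ≤ a i j)
    (hβE : ∀ i, 0 ≤ βE i) (hβ : ∀ i, 0 ≤ β i) (he : ∀ j, 0 ≤ e j) (hp : ∀ j, 0 ≤ p j) (i : V) :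
    0 ≤ forceOfInfection a βE β e p i :=
  add_nonneg (mul_nonneg (hβE i) (Finset.sum_nonneg fun j _ => mul_nonneg (ha i j) (he j)))
    (mul_nonneg (hβ i) (Finset.sum_nonneg fun j _ => mul_nonneg (ha i j) (hp j)))

lemma forceOfInfection_le {a : V → V → ℝ} {βE β e p : V → ℝ} (ha : ∀ i j, 0 ≤ a i j)
    (hβE : ∀ i, 0 ≤ βE i) (hβ : ∀ i, 0 ≤ β i) (he : ∀ j, e j ≤ 1) (hp : ∀ j, p j ≤ 1) (i : V) :
    forceOfInfection a βE β e p i ≤ (βE i + β i) * ∑ j, a i j := by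
  have weighted_le {x : V → ℝ} (hx : ∀ j, x j ≤ 1) : ∑ j, a i j * x j ≤ ∑ j, a i j :=
    Finset.sum_le_sum fun j _ => mul_le_of_le_one_right (ha i j) (hx j)
  rw [forceOfInfection, add_mul]
  exact add_le_add (mul_le_mul_of_nonneg_left (weighted_le he) (hβE i))
    (mul_le_mul_of_nonneg_left (weighted_le hp) (hβ i))

structure IsSEIRTrajectory (h : ℝ) (a : V → V → ℝ) (βE β σ γ : V → ℝ) (s e p r : ℕ → V → ℝ) :
    Prop where
  s_succ : ∀ k i, s (k + 1) i = s k i - h * s k i * forceOfInfection a βE β (e k) (p k) i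
  e_succ : ∀ k i, e (k + 1) i =
    e k i + h * s k i * forceOfInfection a βE β (e k) (p k) i - h * σ i * e k i
  p_succ : ∀ k i, p (k + 1) i = p k i + h * (σ i * e k i - γ i * p k i)
  r_succ : ∀ k i, r (k + 1) i = r k i + h * γ i * p k i

namespace IsSEIRTrajectory

variable {h : ℝ} {a : V → V → ℝ} {βE β σ γ : V → ℝ} {s e p r : ℕ → V → ℝ}

lemma isSEIRDistribution (T : IsSEIRTrajectory h a βE β σ γ s e p r) (hh : 0 ≤ h)
    (ha : ∀ i j, 0 ≤ a i j) (hβE : ∀ i, 0 ≤ βE i) (hβ : ∀ i, 0 ≤ β i)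
    (hγ : ∀ i, 0 ≤ h * γ i ∧ h * γ i ≤ 1) (hσ : ∀ i, 0 ≤ h * σ i ∧ h * σ i ≤ 1)
    (hba : ∀ i, h * (βE i + β i) * ∑ j, a i j ≤ 1)
    (h0 : ∀ i, IsSEIRDistribution (s 0 i) (e 0 i) (p 0 i) (r 0 i)) (k : ℕ) (i : V) :
    IsSEIRDistribution (s k i) (e k i) (p k i) (r k i) := by
  induction k generalizing i with
  | zero => exact h0 i
  | succ k ih =>
    have hι_le := forceOfInfection_le ha hβE hβ (fun j => (ih j).e_le_one)
      (fun j => (ih j).p_le_one) i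
    rw [T.s_succ, T.e_succ, T.p_succ, T.r_succ]
    refine (ih i).step hh
      (forceOfInfection_nonneg ha hβE hβ (fun j => (ih j).e_nonneg) (fun j => (ih j).p_nonneg) i)
      ?_ (hσ i).1 (hσ i).2 (hγ i).1 (hγ i).2
    calc h * forceOfInfection a βE β (e k) (p k) i ≤ h * ((βE i + β i) * ∑ j, a i j) :=
          mul_le_mul_of_nonneg_left hι_le hh
      _ ≤ 1 := by rw [← mul_assoc]; exact hba i

lemma r_le_succ (T : IsSEIRTrajectory h a βE β σ γ s e p r) {k : ℕ} {i : V} (hγ : 0 ≤ h * γ i)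
    (hp : 0 ≤ p k i) : r k i ≤ r (k + 1) i := by
  rw [T.r_succ]
  exact le_add_of_nonneg_right (mul_nonneg hγ hp)

lemma antitone_s (T : IsSEIRTrajectory h a βE β σ γ s e p r) (hh : 0 ≤ h)
    (ha : ∀ i j, 0 ≤ a i j) (hβE : ∀ i, 0 ≤ βE i) (hβ : ∀ i, 0 ≤ β i)
    (hd : ∀ k i, IsSEIRDistribution (s k i) (e k i) (p k i) (r k i)) (i : V) :
    Antitone (s · i) := by
  refine antitone_nat_of_succ_le fun k => ?_
  rw [T.s_succ]
  exact sub_le_self _ <| mul_nonneg (mul_nonneg hh (hd k i).s_nonneg) <|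
    forceOfInfection_nonneg ha hβE hβ (fun j => (hd k j).e_nonneg) (fun j => (hd k j).p_nonneg) i

lemma tendsto_p_zero (T : IsSEIRTrajectory h a βE β σ γ s e p r) {i : V} (hγ : h * γ i ≠ 0)
    {L : ℝ} (hr : Tendsto (r · i) atTop (𝓝 L)) : Tendsto (p · i) atTop (𝓝 0) := by
  have hp : ∀ k, p k i = (r (k + 1) i - r k i) / (h * γ i) := fun k => by
    rw [T.r_succ, eq_div_iff hγ]; ring
  simpa [hp] using hr.succ_sub_nhds_zero.div_const (h * γ i)

lemma tendsto_e_zero (T : IsSEIRTrajectory h a βE β σ γ s e p r) {i : V} (hσ : h * σ i ≠ 0)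
    (hp : Tendsto (p · i) atTop (𝓝 0)) : Tendsto (e · i) atTop (𝓝 0) := by
  have he : ∀ k, e k i = (p (k + 1) i - p k i + h * γ i * p k i) / (h * σ i) := fun k => by
    rw [T.p_succ, eq_div_iff hσ]; ring
  simpa [he] using (hp.succ_sub_nhds_zero.add (hp.const_mul (h * γ i))).div_const (h * σ i)

end IsSEIRTrajectory

end SEIR

lemma tendsto_one_sub_of_sum_eq_one {s e p r : ℕ → ℝ} {sstar : ℝ}
    (hsum : ∀ k, s k + e k + p k + r k = 1) (hs : Tendsto s atTop (𝓝 sstar))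
    (he : Tendsto e atTop (𝓝 0)) (hp : Tendsto p atTop (𝓝 0)) :
    Tendsto r atTop (𝓝 (1 - sstar)) := by
  have hr : r = fun k => 1 - s k - e k - p k := funext fun k => by linarith [hsum k]
  simpa [hr] using ((tendsto_const_nhds.sub hs).sub he).sub hp

/-- In the networked SEIR model the recovered level is non-decreasing
and the system converges to an equilibrium of the form (s*, 0, 0, 1 - s*). -/
theorem seir_r_monotone_limit
    (n : ℕ) (h : ℝ) (a : Fin n → Fin n → ℝ) (βE β σ γ : Fin n → ℝ)
    (s e p r : ℕ → Fin n → ℝ)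
    (hh : 0 < h)
    (ha : ∀ i j, 0 ≤ a i j) (hβE : ∀ i, 0 ≤ βE i) (hβ : ∀ i, 0 ≤ β i)
    (hγ : ∀ i, 0 < h * γ i ∧ h * γ i < 1)
    (hσ : ∀ i, 0 < h * σ i ∧ h * σ i ≤ 1)
    (hba : ∀ i, 0 ≤ h * (βE i + β i) * ∑ j, a i j ∧ h * (βE i + β i) * ∑ j, a i j < 1)
    (hs : ∀ k i, s (k+1) i = s k i -
      h * s k i * (βE i * ∑ j, a i j * e k j + β i * ∑ j, a i j * p k j))
    (he : ∀ k i, e (k+1) i = e k i +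
      h * s k i * (βE i * ∑ j, a i j * e k j + β i * ∑ j, a i j * p k j) - h * σ i * e k i)
    (hp : ∀ k i, p (k+1) i = p k i + h * (σ i * e k i - γ i * p k i))
    (hr : ∀ k i, r (k+1) i = r k i + h * γ i * p k i)
    (hinit : ∀ i, s 0 i ∈ Set.Icc (0:ℝ) 1 ∧ e 0 i ∈ Set.Icc (0:ℝ) 1 ∧
      p 0 i ∈ Set.Icc (0:ℝ) 1 ∧ r 0 i ∈ Set.Icc (0:ℝ) 1 ∧
      s 0 i + e 0 i + p 0 i + r 0 i = 1) :
    (∀ k i, r k i ≤ r (k+1) i) ∧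
    ∃ sstar : Fin n → ℝ, ∀ i,
      Filter.Tendsto (fun k => s k i) Filter.atTop (nhds (sstar i)) ∧
      Filter.Tendsto (fun k => r k i) Filter.atTop (nhds (1 - sstar i)) := by
  have T : IsSEIRTrajectory h a βE β σ γ s e p r := ⟨hs, he, hp, hr⟩
  have hd := T.isSEIRDistribution hh.le ha hβE hβ (fun i => ⟨(hγ i).1.le, (hγ i).2.le⟩)
    (fun i => ⟨(hσ i).1.le, (hσ i).2⟩) (fun i => (hba i).2.le) fun i =>
      ⟨(hinit i).1.1, (hinit i).2.1.1, (hinit i).2.2.1.1, (hinit i).2.2.2.1.1, (hinit i).2.2.2.2⟩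
  have hr_le_succ : ∀ k i, r k i ≤ r (k + 1) i := fun k i =>
    T.r_le_succ (hγ i).1.le (hd k i).p_nonneg
  refine ⟨hr_le_succ, fun i => ⨅ k, s k i, fun i => ?_⟩
  have hs_lim : Tendsto (s · i) atTop (𝓝 (⨅ k, s k i)) :=
    tendsto_atTop_ciInf (T.antitone_s hh.le ha hβE hβ hd i)
      ⟨0, by rintro _ ⟨k, rfl⟩; exact (hd k i).s_nonneg⟩
  have hr_lim : Tendsto (r · i) atTop (𝓝 (⨆ k, r k i)) :=
    tendsto_atTop_ciSup (monotone_nat_of_le_succ fun k => hr_le_succ k i)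
      ⟨1, by rintro _ ⟨k, rfl⟩; exact (hd k i).r_le_one⟩
  have hp_lim := T.tendsto_p_zero (hγ i).1.ne' hr_lim
  exact ⟨hs_lim, tendsto_one_sub_of_sum_eq_one (fun k => (hd k i).sum_eq_one) hs_lim
    (T.tendsto_e_zero (hσ i).1.ne' hp_lim) hp_lim⟩
end

section
/- Consider the homogeneous networked SIR model with data (s^k, p^k, r^k) known for k = 0, …, T and sampling parameter h known, with n ≥ 1 nodes. The parameters (β, γ) can be identified uniquely (i.e., the linear system Δ = Q·(β, γ)ᵀ has a unique solution) if and only if T > 0 and there exist nodes i₁, i₂ and times k₁, k₂ ∈ {0, …, T−1} such that p_{i₁}^{k₁} ≠ 0 and (diag(s^{k₂})·A·p^{k₂})_{i₂} ≠ 0. -/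
/-- Identifiability of the homogeneous networked SIR parameters:
the spread parameters (β, γ) are uniquely determined by the data (s, p, r) over the
horizon T if and only if T > 0 and the data excite both parameters, i.e. some
p_{i₁}^{k₁} ≠ 0 and some (diag(s^{k₂}) A p^{k₂})_{i₂} ≠ 0. -/
theorem sir_homogeneous_identifiability
    (n T : ℕ) (hn : 1 ≤ n) (h : ℝ) (hh : 0 < h)
    (a : Fin n → Fin n → ℝ) (β γ : ℝ)
    (s p r : ℕ → Fin n → ℝ)
    (hp : ∀ k, k < T → ∀ i,
      p (k+1) i = p k i + h * (s k i * β * ∑ j, a i j * p k j - γ * p k i))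
    (hr : ∀ k, k < T → ∀ i, r (k+1) i = r k i + h * γ * p k i) :
    (∀ β' γ' : ℝ,
        (∀ k, k < T → ∀ i,
          p (k+1) i = p k i + h * (s k i * β' * ∑ j, a i j * p k j - γ' * p k i) ∧
          r (k+1) i = r k i + h * γ' * p k i) →
        β' = β ∧ γ' = γ)
      ↔ (0 < T ∧ ∃ (i₁ i₂ : Fin n) (k₁ k₂ : ℕ), k₁ < T ∧ k₂ < T ∧
          p k₁ i₁ ≠ 0 ∧ s k₂ i₂ * ∑ j, a i₂ j * p k₂ j ≠ 0) := by
  constructor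
  · intro H
    -- T > 0
    have hT : 0 < T := by
      by_contra hT0
      have hT0 : T = 0 := by omega
      have := H (β + 1) (γ + 1) (by intro k hk; omega)
      linarith [this.1]
    refine ⟨hT, ?_⟩
    -- existence of nonzero p
    have h1 : ∃ (i₁ : Fin n) (k₁ : ℕ), k₁ < T ∧ p k₁ i₁ ≠ 0 := by
      by_contra h1
      push_neg at h1
      have key : ∀ k, k < T → ∀ i,
          (p (k+1) i = p k i + h * (s k i * (β+1) * ∑ j, a i j * p k j - (γ+1) * p k i)) ∧
          r (k+1) i = r k i + h * (γ+1) * p k i := by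
        intro k hk i
        have hp0 : p k i = 0 := h1 i k hk
        have hsum : (∑ j, a i j * p k j) = 0 := by
          apply Finset.sum_eq_zero
          intro j _
          rw [h1 j k hk, mul_zero]
        constructor
        · rw [hp k hk i, hp0, hsum]; ring
        · rw [hr k hk i, hp0]; ring
      have := H (β + 1) (γ + 1) key
      linarith [this.1]
    have h2 : ∃ (i₂ : Fin n) (k₂ : ℕ), k₂ < T ∧
        s k₂ i₂ * ∑ j, a i₂ j * p k₂ j ≠ 0 := by
      by_contra h2
      push_neg at h2
      have key : ∀ k, k < T → ∀ i,
          (p (k+1) i = p k i + h * (s k i * (β+1) * ∑ j, a i j * p k j - γ * p k i)) ∧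
          r (k+1) i = r k i + h * γ * p k i := by
        intro k hk i
        have hs0 : s k i * ∑ j, a i j * p k j = 0 := h2 i k hk
        constructor
        · rw [hp k hk i]
          have e1 : s k i * (β+1) * ∑ j, a i j * p k j
              = (β+1) * (s k i * ∑ j, a i j * p k j) := by ring
          have e2 : s k i * β * ∑ j, a i j * p k j
              = β * (s k i * ∑ j, a i j * p k j) := by ring
          rw [e1, e2, hs0, mul_zero, mul_zero]
        · exact hr k hk i
      have := H (β + 1) γ key
      linarith [this.1]
    obtain ⟨i₁, k₁, hk₁, hp1⟩ := h1
    obtain ⟨i₂, k₂, hk₂, hs2⟩ := h2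
    exact ⟨i₁, i₂, k₁, k₂, hk₁, hk₂, hp1, hs2⟩
  · rintro ⟨hT, i₁, i₂, k₁, k₂, hk₁, hk₂, hp1, hs2⟩ β' γ' hβγ
    -- γ' = γ
    have hγ : γ' = γ := by
      have e1 := (hβγ k₁ hk₁ i₁).2
      have e2 := hr k₁ hk₁ i₁
      have e3 : γ' * (h * p k₁ i₁) = γ * (h * p k₁ i₁) := by
        nlinarith [e1, e2]
      exact mul_right_cancel₀ (mul_ne_zero hh.ne' hp1) e3
    have hβ : β' = β := by
      have e1 := (hβγ k₂ hk₂ i₂).1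
      have e2 := hp k₂ hk₂ i₂
      rw [hγ] at e1
      set S := ∑ j, a i₂ j * p k₂ j with hS
      have e3 : β' * (h * (s k₂ i₂ * S)) = β * (h * (s k₂ i₂ * S)) := by
        nlinarith [e1, e2]
      have hne : h * (s k₂ i₂ * S) ≠ 0 := mul_ne_zero hh.ne' hs2
      exact mul_right_cancel₀ hne e3
    exact ⟨hβ, hγ⟩
end

section
/- Consider the homogeneous networked SEIR model with data (s^k, e^k, p^k, r^k) known for k = 0, …, T and h known, with n > 1 nodes. The parameters (β^E, β, σ, γ) can be identified uniquely from the stacked linear system if and only if T > 0 and there exist nodes i₁, i₂, i₃, i₄ and times k₁, k₂, k₃, k₄ ∈ {0, …, T−1} such that: p_{i₁}^{k₁} ≠ 0, e_{i₂}^{k₂} ≠ 0, and g_{i₃}^{k₃}(e^{k₃})·g_{i₄}^{k₄}(p^{k₄}) ≠ g_{i₄}^{k₄}(e^{k₄})·g_{i₃}^{k₃}(p^{k₃}), where g_i^k(x) = s_i^k·∑_{j∈N_i} a_{ij}·x_j. -/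
/-- Identifiability of the homogeneous networked SEIR parameters:
with n > 1 nodes, the parameters (βᴱ, β, σ, γ) are uniquely determined by the data
over the horizon T if and only if T > 0 and there exist nodes/times with
p_{i₁}^{k₁} ≠ 0, e_{i₂}^{k₂} ≠ 0 and a nonzero 2×2 minor of the g-columns, where
g_i^k(x) = s_i^k ∑_j a_{ij} x_j. -/
theorem seir_homogeneous_identifiability
    (n T : ℕ) (hn : 1 < n) (h : ℝ) (hh : 0 < h)
    (a : Fin n → Fin n → ℝ) (βE β σ γ : ℝ)
    (s e p r : ℕ → Fin n → ℝ)
    (he : ∀ k, k < T → ∀ i, e (k+1) i = e k i +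
      h * (s k i * (βE * ∑ j, a i j * e k j + β * ∑ j, a i j * p k j) - σ * e k i))
    (hp : ∀ k, k < T → ∀ i, p (k+1) i = p k i + h * (σ * e k i - γ * p k i))
    (hr : ∀ k, k < T → ∀ i, r (k+1) i = r k i + h * γ * p k i) :
    (∀ βE' β' σ' γ' : ℝ,
        (∀ k, k < T → ∀ i,
          e (k+1) i = e k i +
            h * (s k i * (βE' * ∑ j, a i j * e k j + β' * ∑ j, a i j * p k j)
              - σ' * e k i) ∧
          p (k+1) i = p k i + h * (σ' * e k i - γ' * p k i) ∧
          r (k+1) i = r k i + h * γ' * p k i) →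
        βE' = βE ∧ β' = β ∧ σ' = σ ∧ γ' = γ)
      ↔ (0 < T ∧ ∃ (i₁ i₂ i₃ i₄ : Fin n) (k₁ k₂ k₃ k₄ : ℕ),
          k₁ < T ∧ k₂ < T ∧ k₃ < T ∧ k₄ < T ∧
          p k₁ i₁ ≠ 0 ∧ e k₂ i₂ ≠ 0 ∧
          (s k₃ i₃ * ∑ j, a i₃ j * e k₃ j) * (s k₄ i₄ * ∑ j, a i₄ j * p k₄ j) ≠
          (s k₄ i₄ * ∑ j, a i₄ j * e k₄ j) * (s k₃ i₃ * ∑ j, a i₃ j * p k₃ j)) := by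
  constructor
  · -- identifiability → conditions
    intro hid
    by_contra hc
    push_neg at hc
    rcases Nat.eq_zero_or_pos T with hT | hT
    · -- T = 0 : everything is vacuous
      have h1 := hid (βE+1) β σ γ (fun k hk => absurd hk (by omega))
      linarith [h1.1]
    · have hc := hc hT
      by_cases hA : ∀ k, k < T → ∀ i, p k i = 0
      · -- all p vanish : γ not identifiable
        have h1 := hid βE β σ (γ+1) ?_
        · linarith [h1.2.2.2]
        · intro k hk i
          refine ⟨he k hk i, ?_, ?_⟩
          · rw [hp k hk i, hA k hk i]; ring
          · rw [hr k hk i, hA k hk i]; ring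
      · by_cases hB : ∀ k, k < T → ∀ i, e k i = 0
        · -- all e vanish : σ not identifiable
          have h1 := hid βE β (σ+1) γ ?_
          · linarith [h1.2.2.1]
          · intro k hk i
            have hs : ∑ j, a i j * e k j = 0 :=
              Finset.sum_eq_zero fun j _ => by rw [hB k hk j]; ring
            refine ⟨?_, ?_, hr k hk i⟩
            · rw [he k hk i, hB k hk i, hs]; ring
            · rw [hp k hk i, hB k hk i]; ring
        · push_neg at hA hB
          obtain ⟨kp, hkp, ip, hpne⟩ := hA
          obtain ⟨ke, hke, ie, hene⟩ := hB
          have hmin : ∀ (i₃ i₄ : Fin n) (k₃ k₄ : ℕ), k₃ < T → k₄ < T →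
              (s k₃ i₃ * ∑ j, a i₃ j * e k₃ j) * (s k₄ i₄ * ∑ j, a i₄ j * p k₄ j) =
              (s k₄ i₄ * ∑ j, a i₄ j * e k₄ j) * (s k₃ i₃ * ∑ j, a i₃ j * p k₃ j) :=
            fun i₃ i₄ k₃ k₄ h3 h4 =>
              hc ip ie i₃ i₄ kp ke k₃ k₄ hkp hke h3 h4 hpne hene
          by_cases hP0 : ∀ k, k < T → ∀ i, s k i * ∑ j, a i j * p k j = 0
          · -- all g(p) vanish : β not identifiable
            have h1 := hid βE (β+1) σ γ ?_
            · linarith [h1.2.1]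
            · intro k hk i
              refine ⟨?_, hp k hk i, hr k hk i⟩
              rw [he k hk i]
              linear_combination (-h) * hP0 k hk i
          · push_neg at hP0
            obtain ⟨k0, hk0, j0, hgP0⟩ := hP0
            set L : ℝ := (s k0 j0 * ∑ j, a j0 j * e k0 j) /
              (s k0 j0 * ∑ j, a j0 j * p k0 j) with hL
            have h1 := hid (βE+1) (β - L) σ γ ?_
            · linarith [h1.1]
            · intro k hk i
              refine ⟨?_, hp k hk i, hr k hk i⟩
              have hm := hmin i j0 k k0 hk hk0
              have hg : s k i * ∑ j, a i j * e k j =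
                  L * (s k i * ∑ j, a i j * p k j) := by
                rw [hL, div_mul_eq_mul_div, eq_div_iff hgP0]
                linear_combination hm
              rw [he k hk i]
              linear_combination (-h) * hg
  · -- conditions → identifiability
    rintro ⟨hT, i₁, i₂, i₃, i₄, k₁, k₂, k₃, k₄, hk₁, hk₂, hk₃, hk₄, hp1, he2, hdet⟩
    intro βE' β' σ' γ' hall
    have hh' : (h : ℝ) ≠ 0 := ne_of_gt hh
    -- γ
    have hγ : γ' = γ := by
      have h1 := (hall k₁ hk₁ i₁).2.2
      have h2 := hr k₁ hk₁ i₁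
      have key : h * γ * p k₁ i₁ = h * γ' * p k₁ i₁ :=
        add_left_cancel (h2.symm.trans h1)
      have := mul_right_cancel₀ hp1 key
      have := mul_left_cancel₀ hh' this
      linarith
    -- σ
    have hσ : σ' = σ := by
      have h1 := (hall k₂ hk₂ i₂).2.1
      have h2 := hp k₂ hk₂ i₂
      have key : h * (σ * e k₂ i₂ - γ * p k₂ i₂) =
          h * (σ' * e k₂ i₂ - γ' * p k₂ i₂) :=
        add_left_cancel (h2.symm.trans h1)
      rw [hγ] at key
      have key2 := mul_left_cancel₀ hh' key
      have : σ * e k₂ i₂ = σ' * e k₂ i₂ := by linarith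
      exact (mul_right_cancel₀ he2 this).symm
    -- βE, β
    have eq3 : h * ((βE' - βE) * (s k₃ i₃ * ∑ j, a i₃ j * e k₃ j) +
        (β' - β) * (s k₃ i₃ * ∑ j, a i₃ j * p k₃ j)) = 0 := by
      have h1 := (hall k₃ hk₃ i₃).1
      have h2 := he k₃ hk₃ i₃
      rw [hσ] at h1
      linear_combination h2 - h1
    have eq4 : h * ((βE' - βE) * (s k₄ i₄ * ∑ j, a i₄ j * e k₄ j) +
        (β' - β) * (s k₄ i₄ * ∑ j, a i₄ j * p k₄ j)) = 0 := by
      have h1 := (hall k₄ hk₄ i₄).1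
      have h2 := he k₄ hk₄ i₄
      rw [hσ] at h1
      linear_combination h2 - h1
    have eq3' : (βE' - βE) * (s k₃ i₃ * ∑ j, a i₃ j * e k₃ j) +
        (β' - β) * (s k₃ i₃ * ∑ j, a i₃ j * p k₃ j) = 0 :=
      (mul_eq_zero.1 eq3).resolve_left hh'
    have eq4' : (βE' - βE) * (s k₄ i₄ * ∑ j, a i₄ j * e k₄ j) +
        (β' - β) * (s k₄ i₄ * ∑ j, a i₄ j * p k₄ j) = 0 :=
      (mul_eq_zero.1 eq4).resolve_left hh'
    have hdet' : (s k₃ i₃ * ∑ j, a i₃ j * e k₃ j) * (s k₄ i₄ * ∑ j, a i₄ j * p k₄ j) -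
        (s k₄ i₄ * ∑ j, a i₄ j * e k₄ j) * (s k₃ i₃ * ∑ j, a i₃ j * p k₃ j) ≠ 0 :=
      sub_ne_zero.mpr hdet
    have hx : (βE' - βE) *
        ((s k₃ i₃ * ∑ j, a i₃ j * e k₃ j) * (s k₄ i₄ * ∑ j, a i₄ j * p k₄ j) -
         (s k₄ i₄ * ∑ j, a i₄ j * e k₄ j) * (s k₃ i₃ * ∑ j, a i₃ j * p k₃ j)) = 0 := by
      linear_combination (s k₄ i₄ * ∑ j, a i₄ j * p k₄ j) * eq3' -
        (s k₃ i₃ * ∑ j, a i₃ j * p k₃ j) * eq4'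
    have hy : (β' - β) *
        ((s k₃ i₃ * ∑ j, a i₃ j * e k₃ j) * (s k₄ i₄ * ∑ j, a i₄ j * p k₄ j) -
         (s k₄ i₄ * ∑ j, a i₄ j * e k₄ j) * (s k₃ i₃ * ∑ j, a i₃ j * p k₃ j)) = 0 := by
      linear_combination (s k₃ i₃ * ∑ j, a i₃ j * e k₃ j) * eq4' -
        (s k₄ i₄ * ∑ j, a i₄ j * e k₄ j) * eq3'
    have hβE : βE' = βE := by
      have := (mul_eq_zero.1 hx).resolve_right hdet'
      linarith
    have hβ : β' = β := by
      have := (mul_eq_zero.1 hy).resolve_right hdet'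
      linarith
    exact ⟨hβE, hβ, hσ, hγ⟩
end

section
/- Consider the heterogeneous networked SEIR model for a fixed node i, with data s_i^k, e_j^k, p_j^k, r_i^k for all j ∈ N_i ∪ {i} and k = 0, …, T−1, plus e_i^T, p_i^T, r_i^T, and h known. The node-i parameters (β_i^E, β_i, σ_i, γ_i) can be identified uniquely if and only if T > 1 and there exist k₁, k₂, k₃, k₄ ∈ {0, …, T−1} such that p_i^{k₁} ≠ 0, e_i^{k₂} ≠ 0, and g_i^{k₃}(e^{k₃})·g_i^{k₄}(p^{k₄}) ≠ g_i^{k₄}(e^{k₄})·g_i^{k₃}(p^{k₃}), where g_i^k(x) = s_i^k·∑_{j∈N_i} a_{ij}·x_j. -/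
/-- Identifiability of the heterogeneous networked SEIR parameters at a
fixed node i: the node-i parameters (βᵢᴱ, βᵢ, σᵢ, γᵢ) are uniquely determined by the
local data over the horizon T if and only if T > 1 and there exist times with
p_i^{k₁} ≠ 0, e_i^{k₂} ≠ 0 and a nonzero 2×2 minor of the g-columns, where
g_i^k(x) = s_i^k ∑_j a_{ij} x_j. -/
theorem seir_heterogeneous_identifiability
    (n T : ℕ) (h : ℝ) (hh : 0 < h)
    (a : Fin n → Fin n → ℝ) (i : Fin n) (βEi βi σi γi : ℝ)
    (s e p r : ℕ → Fin n → ℝ)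
    (he : ∀ k, k < T → e (k+1) i = e k i +
      h * (s k i * (βEi * ∑ j, a i j * e k j + βi * ∑ j, a i j * p k j) - σi * e k i))
    (hp : ∀ k, k < T → p (k+1) i = p k i + h * (σi * e k i - γi * p k i))
    (hr : ∀ k, k < T → r (k+1) i = r k i + h * γi * p k i) :
    (∀ βEi' βi' σi' γi' : ℝ,
        (∀ k, k < T →
          e (k+1) i = e k i +
            h * (s k i * (βEi' * ∑ j, a i j * e k j + βi' * ∑ j, a i j * p k j)
              - σi' * e k i) ∧
          p (k+1) i = p k i + h * (σi' * e k i - γi' * p k i) ∧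
          r (k+1) i = r k i + h * γi' * p k i) →
        βEi' = βEi ∧ βi' = βi ∧ σi' = σi ∧ γi' = γi)
      ↔ (1 < T ∧ ∃ k₁ k₂ k₃ k₄ : ℕ,
          k₁ < T ∧ k₂ < T ∧ k₃ < T ∧ k₄ < T ∧
          p k₁ i ≠ 0 ∧ e k₂ i ≠ 0 ∧
          (s k₃ i * ∑ j, a i j * e k₃ j) * (s k₄ i * ∑ j, a i j * p k₄ j) ≠
          (s k₄ i * ∑ j, a i j * e k₄ j) * (s k₃ i * ∑ j, a i j * p k₃ j)) := by
  constructor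
  · intro H
    -- a nontrivial linear relation among the g-columns is impossible
    have contra : ∀ x y : ℝ,
        (∀ k, k < T → x * (s k i * ∑ j, a i j * e k j)
            + y * (s k i * ∑ j, a i j * p k j) = 0) →
        x = 0 ∧ y = 0 := by
      intro x y hxy
      have hcond : ∀ k, k < T →
          e (k+1) i = e k i + h * (s k i * ((βEi + x) * ∑ j, a i j * e k j
            + (βi + y) * ∑ j, a i j * p k j) - σi * e k i) ∧
          p (k+1) i = p k i + h * (σi * e k i - γi * p k i) ∧
          r (k+1) i = r k i + h * γi * p k i := by
        intro k hk
        refine ⟨?_, hp k hk, hr k hk⟩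
        linear_combination (he k hk) - h * (hxy k hk)
      obtain ⟨h1, h2, -, -⟩ := H (βEi + x) (βi + y) σi γi hcond
      constructor <;> linarith
    have hT : 1 < T := by
      by_contra hT1
      push_neg at hT1
      rcases Nat.lt_or_ge T 1 with h0 | h1
      · have := (contra 1 0 (fun k hk => absurd hk (by omega))).1
        norm_num at this
      · have hT' : T = 1 := by omega
        by_cases hg : s 0 i * ∑ j, a i j * e 0 j = 0
        · have := (contra 1 0 ?_).1
          · norm_num at this
          · intro k hk
            have hk0 : k = 0 := by omega
            subst hk0
            rw [hg]; ring
        · have := (contra (s 0 i * ∑ j, a i j * p 0 j)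
              (-(s 0 i * ∑ j, a i j * e 0 j)) ?_).2
          · exact hg (neg_eq_zero.mp this)
          · intro k hk
            have hk0 : k = 0 := by omega
            subst hk0
            ring
    have hP : ∃ k, k < T ∧ p k i ≠ 0 := by
      by_contra hc
      push_neg at hc
      have hcond : ∀ k, k < T →
          e (k+1) i = e k i + h * (s k i * (βEi * ∑ j, a i j * e k j
            + βi * ∑ j, a i j * p k j) - σi * e k i) ∧
          p (k+1) i = p k i + h * (σi * e k i - (γi + 1) * p k i) ∧
          r (k+1) i = r k i + h * (γi + 1) * p k i := by
        intro k hk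
        refine ⟨he k hk, ?_, ?_⟩
        · linear_combination (hp k hk) + h * (hc k hk)
        · linear_combination (hr k hk) - h * (hc k hk)
      have := (H βEi βi σi (γi + 1) hcond).2.2.2
      linarith
    have hE : ∃ k, k < T ∧ e k i ≠ 0 := by
      by_contra hc
      push_neg at hc
      have hcond : ∀ k, k < T →
          e (k+1) i = e k i + h * (s k i * (βEi * ∑ j, a i j * e k j
            + βi * ∑ j, a i j * p k j) - (σi + 1) * e k i) ∧
          p (k+1) i = p k i + h * ((σi + 1) * e k i - γi * p k i) ∧
          r (k+1) i = r k i + h * γi * p k i := by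
        intro k hk
        refine ⟨?_, ?_, hr k hk⟩
        · linear_combination (he k hk) + h * (hc k hk)
        · linear_combination (hp k hk) - h * (hc k hk)
      have := (H βEi βi (σi + 1) γi hcond).2.2.1
      linarith
    have hM : ∃ k₃ k₄ : ℕ, k₃ < T ∧ k₄ < T ∧
        (s k₃ i * ∑ j, a i j * e k₃ j) * (s k₄ i * ∑ j, a i j * p k₄ j) ≠
        (s k₄ i * ∑ j, a i j * e k₄ j) * (s k₃ i * ∑ j, a i j * p k₃ j) := by
      by_contra hc
      push_neg at hc
      by_cases hex : ∃ k0, k0 < T ∧ s k0 i * ∑ j, a i j * e k0 j ≠ 0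
      · obtain ⟨k0, hk0, hg0⟩ := hex
        have := (contra (s k0 i * ∑ j, a i j * p k0 j)
            (-(s k0 i * ∑ j, a i j * e k0 j)) ?_).2
        · exact hg0 (neg_eq_zero.mp this)
        · intro k hk
          linear_combination (hc k k0 hk hk0)
      · push_neg at hex
        have := (contra 1 0 ?_).1
        · norm_num at this
        · intro k hk
          rw [hex k hk]; ring
    obtain ⟨k₁, h1, hp1⟩ := hP
    obtain ⟨k₂, h2, he2⟩ := hE
    obtain ⟨k₃, k₄, h3, h4, hm⟩ := hM
    exact ⟨hT, k₁, k₂, k₃, k₄, h1, h2, h3, h4, hp1, he2, hm⟩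
  · rintro ⟨hT, k₁, k₂, k₃, k₄, h1, h2, h3, h4, hp1, he2, hm⟩ βE' β' σ' γ' hcond
    -- γ
    have hA := (hcond k₁ h1).2.2
    have hB := hr k₁ h1
    have hγ : γ' = γi := by
      have hpc : h * γ' * p k₁ i = h * γi * p k₁ i := by linarith
      have := mul_right_cancel₀ hp1 hpc
      exact mul_left_cancel₀ (ne_of_gt hh) this
    -- σ
    have hC := (hcond k₂ h2).2.1
    have hD := hp k₂ h2
    have hσ : σ' = σi := by
      rw [hγ] at hC
      have h1' : h * (σ' * e k₂ i - γi * p k₂ i) = h * (σi * e k₂ i - γi * p k₂ i) := by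
        linarith
      have h2' := mul_left_cancel₀ (ne_of_gt hh) h1'
      have h3' : σ' * e k₂ i = σi * e k₂ i := by linarith
      exact mul_right_cancel₀ he2 h3'
    -- βE and β from the two e-equations
    have E3a := (hcond k₃ h3).1
    have E4a := (hcond k₄ h4).1
    rw [hσ] at E3a E4a
    have E3b := he k₃ h3
    have E4b := he k₄ h4
    have E3 : s k₃ i * (βE' * ∑ j, a i j * e k₃ j + β' * ∑ j, a i j * p k₃ j)
        = s k₃ i * (βEi * ∑ j, a i j * e k₃ j + βi * ∑ j, a i j * p k₃ j) := by
      have hx : h * (s k₃ i * (βE' * ∑ j, a i j * e k₃ j + β' * ∑ j, a i j * p k₃ j)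
          - σi * e k₃ i) = h * (s k₃ i * (βEi * ∑ j, a i j * e k₃ j
          + βi * ∑ j, a i j * p k₃ j) - σi * e k₃ i) := by linarith
      have := mul_left_cancel₀ (ne_of_gt hh) hx
      linarith
    have E4 : s k₄ i * (βE' * ∑ j, a i j * e k₄ j + β' * ∑ j, a i j * p k₄ j)
        = s k₄ i * (βEi * ∑ j, a i j * e k₄ j + βi * ∑ j, a i j * p k₄ j) := by
      have hx : h * (s k₄ i * (βE' * ∑ j, a i j * e k₄ j + β' * ∑ j, a i j * p k₄ j)
          - σi * e k₄ i) = h * (s k₄ i * (βEi * ∑ j, a i j * e k₄ j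
          + βi * ∑ j, a i j * p k₄ j) - σi * e k₄ i) := by linarith
      have := mul_left_cancel₀ (ne_of_gt hh) hx
      linarith
    have hd : (s k₃ i * ∑ j, a i j * e k₃ j) * (s k₄ i * ∑ j, a i j * p k₄ j)
        - (s k₄ i * ∑ j, a i j * e k₄ j) * (s k₃ i * ∑ j, a i j * p k₃ j) ≠ 0 :=
      sub_ne_zero.mpr hm
    have hxE : (βE' - βEi) * ((s k₃ i * ∑ j, a i j * e k₃ j) * (s k₄ i * ∑ j, a i j * p k₄ j)
        - (s k₄ i * ∑ j, a i j * e k₄ j) * (s k₃ i * ∑ j, a i j * p k₃ j)) = 0 := by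
      linear_combination (s k₄ i * ∑ j, a i j * p k₄ j) * E3
        - (s k₃ i * ∑ j, a i j * p k₃ j) * E4
    have hxB : (β' - βi) * ((s k₃ i * ∑ j, a i j * e k₃ j) * (s k₄ i * ∑ j, a i j * p k₄ j)
        - (s k₄ i * ∑ j, a i j * e k₄ j) * (s k₃ i * ∑ j, a i j * p k₃ j)) = 0 := by
      linear_combination (s k₃ i * ∑ j, a i j * e k₃ j) * E4
        - (s k₄ i * ∑ j, a i j * e k₄ j) * E3
    have hβE : βE' = βEi := by
      have := (mul_eq_zero.mp hxE).resolve_right hd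
      linarith
    have hβ : β' = βi := by
      have := (mul_eq_zero.mp hxB).resolve_right hd
      linarith
    exact ⟨hβE, hβ, hσ, hγ⟩
end

section
/- In the discrete-time networked SIR model under well-posedness assumptions (0 < h·γ_i < 1 and h·β_i·∑_{j∈N_i} a_{ij} < 1 with nonnegative parameters and valid initial conditions), the susceptible level of each node is non-increasing (s_i^{k+1} ≤ s_i^k for all i, k) and the infected level of every node converges to zero: lim_{k→∞} p_i^k = 0. -/
/-- In the networked SIR model under well-posedness assumptions,
the susceptible levels are non-increasing and the infected level of every node
converges to zero. -/
theorem sir_p_to_zero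
    (n : ℕ) (h : ℝ) (a : Fin n → Fin n → ℝ) (β γ : Fin n → ℝ)
    (s p r : ℕ → Fin n → ℝ)
    (hh : 0 < h)
    (ha : ∀ i j, 0 ≤ a i j) (hβ : ∀ i, 0 ≤ β i)
    (hγ : ∀ i, 0 < h * γ i ∧ h * γ i < 1)
    (hba : ∀ i, h * β i * ∑ j, a i j < 1)
    (hs : ∀ k i, s (k+1) i = s k i - h * s k i * (β i * ∑ j, a i j * p k j))
    (hp : ∀ k i, p (k+1) i = p k i + h * (s k i * (β i * ∑ j, a i j * p k j) - γ i * p k i))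
    (hr : ∀ k i, r (k+1) i = r k i + h * γ i * p k i)
    (hinit : ∀ i, s 0 i ∈ Set.Icc (0:ℝ) 1 ∧ p 0 i ∈ Set.Icc (0:ℝ) 1 ∧
      r 0 i ∈ Set.Icc (0:ℝ) 1 ∧ s 0 i + p 0 i + r 0 i = 1) :
    (∀ k i, s (k+1) i ≤ s k i) ∧
    ∀ i, Filter.Tendsto (fun k => p k i) Filter.atTop (nhds 0) := by
  -- Invariant: nonnegativity, p ≤ 1, and sum = 1.
  have inv : ∀ k, ∀ i, 0 ≤ s k i ∧ 0 ≤ p k i ∧ p k i ≤ 1 ∧ 0 ≤ r k i ∧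
      s k i + p k i + r k i = 1 := by
    intro k
    induction k with
    | zero =>
      intro i
      obtain ⟨hs0, hp0, hr0, hsum⟩ := hinit i
      exact ⟨hs0.1, hp0.1, hp0.2, hr0.1, hsum⟩
    | succ k ih =>
      intro i
      obtain ⟨hsk, hpk, hpk1, hrk, hsum⟩ := ih i
      set F : ℝ := β i * ∑ j, a i j * p k j with hFdef
      have hFnn : 0 ≤ F := by
        apply mul_nonneg (hβ i)
        exact Finset.sum_nonneg fun j _ => mul_nonneg (ha i j) (ih j).2.1
      have hFlt : h * F < 1 := by
        have hS : ∑ j, a i j * p k j ≤ ∑ j, a i j := by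
          apply Finset.sum_le_sum
          intro j _
          calc a i j * p k j ≤ a i j * 1 :=
                mul_le_mul_of_nonneg_left (ih j).2.2.1 (ha i j)
            _ = a i j := mul_one _
        calc h * F = h * β i * ∑ j, a i j * p k j := by rw [hFdef]; ring
          _ ≤ h * β i * ∑ j, a i j :=
              mul_le_mul_of_nonneg_left hS (mul_nonneg hh.le (hβ i))
          _ < 1 := hba i
      have hsnext : 0 ≤ s (k+1) i := by
        rw [hs k i]
        have : s k i - h * s k i * F = s k i * (1 - h * F) := by ring
        rw [this]
        exact mul_nonneg hsk (by linarith)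
      have hpnext : 0 ≤ p (k+1) i := by
        rw [hp k i]
        have : p k i + h * (s k i * F - γ i * p k i)
            = p k i * (1 - h * γ i) + h * (s k i * F) := by ring
        rw [this]
        have := (hγ i).2
        have h1 : 0 ≤ p k i * (1 - h * γ i) := mul_nonneg hpk (by linarith)
        have h2 : 0 ≤ h * (s k i * F) := mul_nonneg hh.le (mul_nonneg hsk hFnn)
        linarith
      have hrnext : 0 ≤ r (k+1) i := by
        rw [hr k i]
        have : 0 ≤ h * γ i * p k i := mul_nonneg (hγ i).1.le hpk
        linarith
      have hsumnext : s (k+1) i + p (k+1) i + r (k+1) i = 1 := by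
        rw [hs k i, hp k i, hr k i]; linarith [hsum]
      refine ⟨hsnext, hpnext, by linarith, hrnext, hsumnext⟩
  -- Susceptible levels are non-increasing.
  have smono : ∀ k i, s (k+1) i ≤ s k i := by
    intro k i
    rw [hs k i]
    have hFnn : 0 ≤ β i * ∑ j, a i j * p k j := by
      apply mul_nonneg (hβ i)
      exact Finset.sum_nonneg fun j _ => mul_nonneg (ha i j) (inv k j).2.1
    have : 0 ≤ h * s k i * (β i * ∑ j, a i j * p k j) :=
      mul_nonneg (mul_nonneg hh.le (inv k i).1) hFnn
    linarith
  refine ⟨smono, ?_⟩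
  intro i
  -- Lyapunov function f k = s k i + p k i.
  set f : ℕ → ℝ := fun k => s k i + p k i with hfdef
  have hstep : ∀ k, f (k+1) = f k - h * γ i * p k i := by
    intro k
    simp only [hfdef]
    rw [hs k i, hp k i]; ring
  have hant : Antitone f := by
    apply antitone_nat_of_succ_le
    intro k
    rw [hstep k]
    have : 0 ≤ h * γ i * p k i := mul_nonneg (hγ i).1.le (inv k i).2.1
    linarith
  have hbdd : BddBelow (Set.range f) := by
    refine ⟨0, ?_⟩
    rintro x ⟨k, rfl⟩
    exact add_nonneg (inv k i).1 (inv k i).2.1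
  have h0 : Filter.Tendsto f Filter.atTop (nhds (⨅ k, f k)) :=
    tendsto_atTop_ciInf hant hbdd
  have h1 : Filter.Tendsto (fun k => f (k+1)) Filter.atTop (nhds (⨅ k, f k)) :=
    h0.comp (Filter.tendsto_add_atTop_nat 1)
  have hdiff : Filter.Tendsto (fun k => f k - f (k+1)) Filter.atTop (nhds 0) := by
    simpa using h0.sub h1
  have hpeq : ∀ k, p k i = (f k - f (k+1)) / (h * γ i) := by
    intro k
    rw [hstep k]
    rw [sub_sub_cancel]
    exact (mul_div_cancel_left₀ _ (ne_of_gt (hγ i).1)).symm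
  have : Filter.Tendsto (fun k => (f k - f (k+1)) / (h * γ i))
      Filter.atTop (nhds 0) := by
    simpa using hdiff.div_const (h * γ i)
  exact this.congr fun k => (hpeq k).symm
end
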